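/- arXiv:1901.06781 — 2 statements merged into one kernel-verified Lean document; each statement's English description precedes it below -/
import Mathlib

section
/- Let p = nk+1 be a prime with n = 2m even and k odd, and let H = {x^n : x ∈ 𝔽_p^×} be the multiplicative subgroup of 𝔽_p^× of index n. If p > n^4 + 5, then there exist x, y, z ∈ H with x + y = −z, i.e., x + y + z = 0 in 𝔽_p. -/
/-!
Taking `x = 1`, it suffices to find `s, -1 - s ∈ H`. For a character `χ` of order `n`, the sum
`∑_{j<n} χʲ(t)` vanishes for `t ∉ H`, so it suffices that
`S = ∑_s (∑_i χⁱ(s)) (∑_j χʲ(-1 - s))` is nonzero. Expanding,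
`S = ∑_{i,j<n} χⁱ(-1) χʲ(-1) J(χⁱ, χʲ)`: the term `i = j = 0` is `p - 2`, and each of the other
`n² - 1` terms has absolute value at most `√p`, since a Jacobi sum of two nontrivial characters
with nontrivial product has absolute value `√p`, and otherwise it is `-1` or `-χ(-1)`.
Finally `p > n⁴ + 5` gives `(n² - 1)√p < p - 2`.
-/

open Pointwise

/-- The set of nonzero `n`-th power residues in `𝔽_p = ZMod p`. -/
def Hpow (p n : ℕ) : Set (ZMod p) := {x | ∃ u : (ZMod p)ˣ, (u : ZMod p) ^ n = x}

open Finset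

namespace MulChar

lemma norm_apply_of_isUnit {R : Type*} [CommRing R] [Finite Rˣ] (χ : MulChar R ℂ) {a : R}
    (ha : IsUnit a) : ‖χ a‖ = 1 := by
  have := Fintype.ofFinite Rˣ
  rw [← ha.unit_spec]
  exact Complex.norm_eq_one_of_mem_rootsOfUnity (χ.apply_mem_rootsOfUnity ha.unit)

variable {F : Type*} [Field F]

lemma exists_pow_orderOf_eq_of_apply_eq_one [Finite F] {R : Type*} [CommRing R] [Nontrivial R]
    {χ : MulChar F R} {t : F} (h : χ t = 1) : ∃ u : Fˣ, (u : F) ^ orderOf χ = t := by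
  have ht : t ≠ 0 := by
    rintro rfl
    exact zero_ne_one (χ.map_zero.symm.trans h)
  obtain ⟨g, hg⟩ := IsCyclic.exists_monoid_generator (α := Fˣ)
  have horder : orderOf (χ g) = orderOf χ := by
    refine orderOf_eq_orderOf_iff.mpr fun j => ?_
    rw [MulChar.eq_iff fun x => Submonoid.powers_le_zpowers _ (hg x), one_apply_coe,
      pow_apply_coe]
  obtain ⟨a, ha⟩ := hg (Units.mk0 t ht)
  have hta : t = (g : F) ^ a := by rw [← Units.val_pow_eq_pow_val]; exact congrArg Units.val ha.symm
  have hdvd : orderOf χ ∣ a := by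
    rw [← horder, orderOf_dvd_iff_pow_eq_one, ← map_pow, ← hta, h]
  obtain ⟨b, rfl⟩ := hdvd
  exact ⟨g ^ b, by rw [hta, Units.val_pow_eq_pow_val, ← pow_mul, mul_comm]⟩

lemma sum_range_pow_apply_eq_zero_of_apply_ne_one {R : Type*} [CommRing R] [IsDomain R]
    {χ : MulChar F R} {n : ℕ} (hχ : χ ^ n = 1) {t : F} (ht : χ t ≠ 1) :
    ∑ j ∈ range n, (χ ^ j) t = 0 := by
  by_cases ht0 : t = 0
  · simp [ht0]
  obtain ⟨u, rfl⟩ := (isUnit_iff_ne_zero.mpr ht0)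
  have hroot : χ u ^ n = 1 := by rw [← pow_apply_coe, hχ, one_apply_coe]
  simp_rw [pow_apply_coe]
  have := geom_sum_mul (χ u) n
  rw [hroot, sub_self] at this
  exact (mul_eq_zero.mp this).resolve_right (sub_ne_zero.mpr ht)

end MulChar

variable {F : Type*} [Field F] [Fintype F]

lemma norm_jacobiSum_eq_sqrt {χ φ : MulChar F ℂ} (hχ : χ ≠ 1) (hφ : φ ≠ 1) (hχφ : χ * φ ≠ 1) :
    ‖jacobiSum χ φ‖ = √(Fintype.card F) := by
  have hchar : ringChar ℂ ≠ ringChar F := by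
    rw [ringChar.eq_zero]
    exact (CharP.char_ne_zero_of_finite F (ringChar F)).symm
  have hconj : jacobiSum χ⁻¹ φ⁻¹ = star (jacobiSum χ φ) := by
    simp only [jacobiSum, star_sum, star_mul', MulChar.star_apply']
  have hnormSq := jacobiSum_mul_jacobiSum_inv hchar hχ hφ hχφ
  rw [hconj, RCLike.star_def, Complex.mul_conj] at hnormSq
  have hsq : Complex.normSq (jacobiSum χ φ) = Fintype.card F := by exact_mod_cast hnormSq
  rw [Complex.norm_def, hsq]

lemma norm_jacobiSum_le_sqrt {χ φ : MulChar F ℂ} (h : χ ≠ 1 ∨ φ ≠ 1) :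
    ‖jacobiSum χ φ‖ ≤ √(Fintype.card F) := by
  have hone : 1 ≤ √(Fintype.card F : ℝ) :=
    Real.one_le_sqrt.mpr (by exact_mod_cast Fintype.card_pos)
  by_cases hχ : χ = 1
  · rw [hχ, jacobiSum_one_nontrivial (h.resolve_left (not_not.mpr hχ)), norm_neg, norm_one]
    exact hone
  by_cases hφ : φ = 1
  · rw [hφ, jacobiSum_comm, jacobiSum_one_nontrivial hχ, norm_neg, norm_one]
    exact hone
  by_cases hχφ : χ * φ = 1
  · rw [eq_inv_of_mul_eq_one_right hχφ, jacobiSum_nontrivial_inv hχ, norm_neg,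
      χ.norm_apply_of_isUnit isUnit_one.neg]
    exact hone
  exact (norm_jacobiSum_eq_sqrt hχ hφ hχφ).le

lemma sum_apply_mul_apply_neg_one_sub {R R' : Type*} [CommRing R] [Fintype R] [CommRing R']
    (χ ψ : MulChar R R') : ∑ s, χ s * ψ (-1 - s) = χ (-1) * ψ (-1) * jacobiSum χ ψ := by
  rw [jacobiSum, mul_sum, ← Equiv.sum_comp (Equiv.neg R) (fun s => χ s * ψ (-1 - s))]
  refine sum_congr rfl fun s _ => ?_
  rw [Equiv.neg_apply, show -1 - -s = -1 * (1 - s) by ring, neg_eq_neg_one_mul s, map_mul, map_mul]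
  ring

lemma sum_mul_sum_eq_sum_jacobiSum {R R' : Type*} [CommRing R] [Fintype R] [CommRing R']
    (χ : MulChar R R') (n : ℕ) :
    ∑ s, (∑ i ∈ range n, (χ ^ i) s) * ∑ j ∈ range n, (χ ^ j) (-1 - s) =
      ∑ ij ∈ range n ×ˢ range n,
        (χ ^ ij.1) (-1) * (χ ^ ij.2) (-1) * jacobiSum (χ ^ ij.1) (χ ^ ij.2) := by
  simp_rw [sum_mul_sum, sum_product' (f := fun i j => (χ ^ i) (-1) * (χ ^ j) (-1) *
    jacobiSum (χ ^ i) (χ ^ j)), ← sum_apply_mul_apply_neg_one_sub]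
  rw [sum_comm]
  exact sum_congr rfl fun i _ => sum_comm

lemma norm_sum_mul_sum_sub_card_sub_two_le (χ : MulChar F ℂ) :
    ‖∑ s, (∑ i ∈ range (orderOf χ), (χ ^ i) s) * ∑ j ∈ range (orderOf χ), (χ ^ j) (-1 - s) -
        ((Fintype.card F : ℂ) - 2)‖ ≤ ((orderOf χ : ℝ) ^ 2 - 1) * √(Fintype.card F) := by
  set n := orderOf χ
  have hn : 0 < n := χ.orderOf_pos
  set T : ℕ × ℕ → ℂ := fun ij => (χ ^ ij.1) (-1) * (χ ^ ij.2) (-1) * jacobiSum (χ ^ ij.1) (χ ^ ij.2)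
  have hmem : (0, 0) ∈ range n ×ˢ range n := by simp [hn]
  have hT00 : T (0, 0) = (Fintype.card F : ℂ) - 2 := by
    simp [T, jacobiSum_one_one, MulChar.one_apply isUnit_one.neg]
  have hT : ∀ ij ∈ (range n ×ˢ range n).erase (0, 0), ‖T ij‖ ≤ √(Fintype.card F) := by
    rintro ⟨i, j⟩ hij
    simp only [mem_erase, mem_product, mem_range, ne_eq, Prod.mk.injEq, not_and_or] at hij
    obtain ⟨hij0, hi, hj⟩ := hij
    have hnontriv : χ ^ i ≠ 1 ∨ χ ^ j ≠ 1 := hij0.imp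
      (fun hi0 => pow_ne_one_of_lt_orderOf hi0 hi) (fun hj0 => pow_ne_one_of_lt_orderOf hj0 hj)
    simp only [T, norm_mul, MulChar.norm_apply_of_isUnit _ isUnit_one.neg, one_mul]
    exact norm_jacobiSum_le_sqrt hnontriv
  have hcard : (((range n ×ˢ range n).erase (0, 0)).card : ℝ) = (n : ℝ) ^ 2 - 1 := by
    rw [card_erase_of_mem hmem, card_product, card_range, Nat.cast_sub (by nlinarith)]
    push_cast
    ring
  rw [sum_mul_sum_eq_sum_jacobiSum, ← hT00, ← sum_erase_eq_sub hmem, ← hcard, ← nsmul_eq_mul]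
  exact (norm_sum_le _ _).trans (sum_le_card_nsmul _ _ _ hT)

theorem exists_pow_add_pow_eq_neg_one {n : ℕ} (hn : n ∣ Fintype.card F - 1)
    (hq : ((n : ℝ) ^ 2 - 1) * √(Fintype.card F) < Fintype.card F - 2) :
    ∃ u v : Fˣ, (u : F) ^ n + (v : F) ^ n = -1 := by
  have hn0 : n ≠ 0 := by
    rintro rfl
    have := Fintype.one_lt_card (α := F)
    omega
  obtain ⟨χ, rfl⟩ := MulChar.exists_mulChar_orderOf F hn (Complex.isPrimitiveRoot_exp n hn0)
  set S := ∑ s, (∑ i ∈ range (orderOf χ), (χ ^ i) s) * ∑ j ∈ range (orderOf χ), (χ ^ j) (-1 - s)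
  have hS : S ≠ 0 := by
    intro h0
    have hbound := norm_sum_mul_sum_sub_card_sub_two_le χ
    change ‖S - _‖ ≤ _ at hbound
    have hre : Fintype.card F - 2 ≤ ‖S - ((Fintype.card F : ℂ) - 2)‖ := by
      refine le_trans ?_ (Complex.abs_re_le_norm _)
      simp only [h0, zero_sub, Complex.neg_re, Complex.sub_re, Complex.natCast_re, Complex.re_ofNat,
        abs_neg]
      exact le_abs_self _
    linarith
  obtain ⟨s, -, hs⟩ := exists_ne_zero_of_sum_ne_zero hS
  have hpow : ∀ t : F, ∑ i ∈ range (orderOf χ), (χ ^ i) t ≠ 0 → ∃ u : Fˣ, (u : F) ^ orderOf χ = t :=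
    fun t ht => MulChar.exists_pow_orderOf_eq_of_apply_eq_one <| not_not.mp fun h =>
      ht (MulChar.sum_range_pow_apply_eq_zero_of_apply_ne_one (pow_orderOf_eq_one χ) h)
  obtain ⟨u, hu⟩ := hpow s (left_ne_zero_of_mul hs)
  obtain ⟨v, hv⟩ := hpow (-1 - s) (right_ne_zero_of_mul hs)
  exact ⟨u, v, by rw [hu, hv]; ring⟩

lemma sub_one_mul_sqrt_lt_sub_two {a q : ℝ} (ha : a ^ 2 < q) (hq : 4 < q) :
    (a - 1) * √q < q - 2 := by
  have hsq : √q ^ 2 = q := Real.sq_sqrt (by linarith)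
  have hlt : a < √q := Real.lt_sqrt_of_sq_lt ha
  have htwo : 2 < √q := Real.lt_sqrt_of_sq_lt (by linarith)
  nlinarith

theorem stmt_1_general (p n k : ℕ) (hp : p.Prime) (hpnk : p = n * k + 1) (hbig : p > n ^ 4 + 5) :
    ∃ x ∈ Hpow p n, ∃ y ∈ Hpow p n, ∃ z ∈ Hpow p n, x + y = -z := by
  have := Fact.mk hp
  have hdvd : n ∣ Fintype.card (ZMod p) - 1 := by simp [ZMod.card, hpnk]
  have hq : ((n : ℝ) ^ 2 - 1) * √(Fintype.card (ZMod p)) < Fintype.card (ZMod p) - 2 := by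
    rw [ZMod.card]
    apply sub_one_mul_sqrt_lt_sub_two <;> norm_cast
    · rw [← pow_mul]; norm_num; omega
    · omega
  obtain ⟨u, v, huv⟩ := exists_pow_add_pow_eq_neg_one hdvd hq
  exact ⟨1, ⟨1, one_pow n⟩, _, ⟨u, rfl⟩, _, ⟨v, rfl⟩, by linear_combination huv⟩

/-- If `p = n*k + 1` is prime with `n = 2m` even and `k` odd, and `p > n^4 + 5`, then there
exist `x, y, z` in the subgroup `H` of nonzero `n`-th power residues with `x + y = -z`,
i.e. `x + y + z = 0`. -/
theorem stmt_1 (p n k m : ℕ) (hp : p.Prime) (hpnk : p = n * k + 1)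
    (hn : n = 2 * m) (hm : 0 < m) (hk : Odd k) (hbig : p > n ^ 4 + 5) :
    ∃ x ∈ Hpow p n, ∃ y ∈ Hpow p n, ∃ z ∈ Hpow p n, x + y = -z :=
  stmt_1_general p n k hp hpnk hbig
end

section
/- There exists a primitive root g modulo 67 such that the cosets X_i = g^i·H (0 ≤ i < 6, indices mod 6) of the subgroup H of 6th-power residues in 𝔽_67^× form a 3-color Directed Anti-Ramsey algebra, i.e., with m = 3: (1) for all i, X_i + X_i = ⋃_{j ≠ i+3} X_j; (2) for all i, X_i + X_{i+3} = 𝔽_67; (3) for all i, j with i ≠ j and j ≠ i+3, X_i + X_j = 𝔽_67 ∖ {0}. -/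
/-
Since `X_{i+j} = g^i • X_j` and `X_{i+n} = X_i`, multiplication by `g^i` permutes the cosets
cyclically and distributes over sumsets: `X_i + X_j = g^i • (X_0 + X_{j-i})`. It also fixes `𝔽_p`
and `𝔽_p ∖ {0}`, so all three conditions reduce to the six sumsets `X_0 + X_d`, which for
`p = 67`, `n = 6`, `g = 2` are finite computations.
-/

open Pointwise

/-- The coset `X_i = g^i · H` of the subgroup of `n`-th power residues. -/
noncomputable def Xc (p n : ℕ) [Fact p.Prime] (g : ZMod p) (i : ℤ) : Set (ZMod p) :=
  g ^ i • Hpow p n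

instance : Fact (Nat.Prime 67) := ⟨by norm_num⟩

lemma Set.smul_set_compl_zero {K : Type*} [GroupWithZero K] {a : K} (ha : a ≠ 0) :
    a • ({0}ᶜ : Set K) = {0}ᶜ := by
  rw [Set.compl_eq_univ_sdiff, Set.smul_set_sdiff₀ ha, Set.smul_set_univ₀ ha,
    Set.smul_set_singleton, smul_eq_mul, mul_zero]

section
variable {p n : ℕ} {g : ZMod p}

lemma pow_smul_Hpow (u : (ZMod p)ˣ) : (u : ZMod p) ^ n • Hpow p n = Hpow p n := by
  ext x
  simp only [Set.mem_smul_set, Hpow, Set.mem_ofPred_eq, smul_eq_mul]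
  constructor
  · rintro ⟨_, ⟨v, rfl⟩, rfl⟩
    exact ⟨u * v, by rw [Units.val_mul, mul_pow]⟩
  · rintro ⟨w, rfl⟩
    exact ⟨_, ⟨u⁻¹ * w, rfl⟩, by rw [← mul_pow, ← Units.val_mul, mul_inv_cancel_left]⟩

variable [Fact p.Prime]

lemma Hpow_eq_image : Hpow p n = ↑((Finset.univ.erase 0).image fun y : ZMod p => y ^ n) := by
  ext x
  simp only [Hpow, Set.mem_ofPred_eq, Finset.coe_image, Finset.coe_erase, Finset.coe_univ,
    Set.mem_image, Set.mem_sdiff, Set.mem_univ, Set.mem_singleton_iff, true_and]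
  constructor
  · rintro ⟨u, rfl⟩
    exact ⟨u, u.ne_zero, rfl⟩
  · rintro ⟨y, hy, rfl⟩
    exact ⟨Units.mk0 y hy, rfl⟩

lemma Xc_natCast_eq_image (k : ℕ) :
    Xc p n g k = ↑((Finset.univ.erase 0).image fun y : ZMod p => g ^ k * y ^ n) := by
  rw [Xc, zpow_natCast, Hpow_eq_image, ← Finset.coe_smul_finset, Finset.smul_finset_def,
    Finset.image_image]
  rfl

lemma Xc_add (hg : g ≠ 0) (i j : ℤ) : Xc p n g (i + j) = g ^ i • Xc p n g j := by
  rw [Xc, Xc, zpow_add₀ hg, mul_smul]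

lemma Xc_natCast_mul (hg : g ≠ 0) (k : ℤ) : Xc p n g (n * k) = Hpow p n := by
  rw [Xc, mul_comm, zpow_mul, zpow_natCast, ← Units.val_mk0 hg, ← Units.val_zpow_eq_zpow_val,
    pow_smul_Hpow]

lemma Xc_congr (hg : g ≠ 0) {i j : ℤ} (h : (i : ZMod n) = (j : ZMod n)) :
    Xc p n g i = Xc p n g j := by
  obtain ⟨k, hk⟩ := (ZMod.intCast_eq_intCast_iff_dvd_sub _ _ _).1 h
  rw [show j = i + n * k by omega, Xc_add hg, Xc_natCast_mul hg, Xc]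

lemma Xc_add_Xc_eq_smul (hg : g ≠ 0) (i j : ℤ) :
    Xc p n g i + Xc p n g j = g ^ i • (Xc p n g 0 + Xc p n g (j - i)) := by
  rw [smul_add, ← Xc_add hg, ← Xc_add hg, add_zero, add_sub_cancel]

lemma smul_iUnion_Xc (hg : g ≠ 0) (i m : ℤ) :
    g ^ i • ⋃ j ∈ {j : ℤ | (j : ZMod n) ≠ (m : ZMod n)}, Xc p n g j =
      ⋃ j ∈ {j : ℤ | (j : ZMod n) ≠ ((i + m : ℤ) : ZMod n)}, Xc p n g j := by
  simp only [Set.smul_set_iUnion₂, ← Xc_add hg]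
  ext x
  simp only [Set.mem_iUnion, Set.mem_ofPred_eq, exists_prop]
  constructor
  · rintro ⟨j, hj, hx⟩
    exact ⟨i + j, by push_cast; simpa using hj, hx⟩
  · rintro ⟨j, hj, hx⟩
    refine ⟨j - i, ?_, by rwa [add_sub_cancel]⟩
    push_cast
    rwa [Ne, sub_eq_iff_eq_add', ← Int.cast_add]

end

def coset67 (c : ZMod 6) : Finset (ZMod 67) :=
  (Finset.univ.erase 0).image fun y => 2 ^ c.val * y ^ 6

lemma two_ne_zero_zmod67 : (2 : ZMod 67) ≠ 0 := by decide

lemma Xc_eq_coset67 (i : ℤ) : Xc 67 6 2 i = coset67 i := by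
  rw [Xc_congr two_ne_zero_zmod67 (j := (i : ZMod 6).val) (by simp), Xc_natCast_eq_image]
  rfl

lemma isPrimitiveRoot_two_zmod67 : IsPrimitiveRoot (2 : ZMod 67) 66 := by
  refine IsPrimitiveRoot.mk_of_lt 2 (by norm_num) (by decide) fun l hl0 hl => ?_
  have h : ∀ l < 66, 0 < l → (2 : ZMod 67) ^ l ≠ 1 := by decide
  exact h l hl hl0

lemma Xc_zero_add_Xc_zero :
    Xc 67 6 2 0 + Xc 67 6 2 0 = ⋃ j ∈ {j : ℤ | (j : ZMod 6) ≠ ((3 : ℤ) : ZMod 6)}, Xc 67 6 2 j := by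
  have h : coset67 0 + coset67 0 = (Finset.univ.filter (· ≠ 3)).biUnion coset67 := by
    decide +kernel
  ext x
  simp only [Xc_eq_coset67, ← Finset.coe_add, h, Int.cast_zero, Finset.mem_coe, Set.mem_iUnion,
    Finset.mem_biUnion, Finset.mem_filter, Finset.mem_univ, true_and, Set.mem_ofPred_eq,
    exists_prop, Int.cast_ofNat]
  constructor
  · rintro ⟨c, hc, hx⟩
    exact ⟨c.val, by simpa using hc, by simpa using hx⟩
  · rintro ⟨j, hj, hx⟩
    exact ⟨j, hj, hx⟩

lemma Xc_zero_add_Xc_three : Xc 67 6 2 0 + Xc 67 6 2 3 = Set.univ := by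
  have h : coset67 0 + coset67 3 = Finset.univ := by decide +kernel
  rw [Xc_eq_coset67, Xc_eq_coset67, ← Finset.coe_add]
  exact_mod_cast h

lemma Xc_zero_add_Xc_of_ne {d : ℤ} (h0 : (d : ZMod 6) ≠ 0) (h3 : (d : ZMod 6) ≠ 3) :
    Xc 67 6 2 0 + Xc 67 6 2 d = {0}ᶜ := by
  have h : ∀ c : ZMod 6, c ≠ 0 → c ≠ 3 → coset67 0 + coset67 c = Finset.univ.erase 0 := by
    decide +kernel
  rw [Xc_eq_coset67, Xc_eq_coset67, ← Finset.coe_add, Int.cast_zero, h _ h0 h3,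
    Finset.coe_erase, Finset.coe_univ, Set.compl_eq_univ_sdiff]

/-- The cosets of the index-6 subgroup of `𝔽_67ˣ` form a 3-color Directed
Anti-Ramsey algebra. -/
theorem stmt_11 : ∃ g : ZMod 67, IsPrimitiveRoot g 66 ∧
    (∀ i : ℤ, Xc 67 6 g i + Xc 67 6 g i =
      ⋃ j ∈ {j : ℤ | (j : ZMod 6) ≠ ((i + 3 : ℤ) : ZMod 6)}, Xc 67 6 g j) ∧
    (∀ i : ℤ, Xc 67 6 g i + Xc 67 6 g (i + 3) = Set.univ) ∧
    (∀ i j : ℤ, (j : ZMod 6) ≠ (i : ZMod 6) → (j : ZMod 6) ≠ ((i + 3 : ℤ) : ZMod 6) →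
      Xc 67 6 g i + Xc 67 6 g j = {(0 : ZMod 67)}ᶜ) := by
  have h2 := two_ne_zero_zmod67
  have h2i : ∀ i : ℤ, (2 : ZMod 67) ^ i ≠ 0 := fun i => zpow_ne_zero i h2
  refine ⟨2, isPrimitiveRoot_two_zmod67, fun i => ?_, fun i => ?_, fun i j hji hji3 => ?_⟩
  · rw [Xc_add_Xc_eq_smul h2, sub_self, Xc_zero_add_Xc_zero, smul_iUnion_Xc h2]
  · rw [Xc_add_Xc_eq_smul h2, add_sub_cancel_left, Xc_zero_add_Xc_three,
      Set.smul_set_univ₀ (h2i i)]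
  · have h0 : ((j - i : ℤ) : ZMod 6) ≠ 0 := by push_cast; exact sub_ne_zero.2 hji
    have h3 : ((j - i : ℤ) : ZMod 6) ≠ 3 := by
      push_cast at hji3 ⊢; rwa [Ne, sub_eq_iff_eq_add']
    rw [Xc_add_Xc_eq_smul h2, Xc_zero_add_Xc_of_ne h0 h3, Set.smul_set_compl_zero (h2i i)]
end
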